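/- For every integer n ≥ 5, the number of non-equivalent distinguishing colorings of the cycle C_n using exactly n − 1 colors equals (n−1)·(n−1)!/4, i.e., φ_{n−1}(C_n) = (n−1)·(n−1)!/4. -/

import Mathlib

open SimpleGraph

def IsDistinguishing {V : Type*} {k : ℕ} (G : SimpleGraph V) (c : V → Fin k) : Prop :=
  ∀ α : G ≃g G, (∀ v, c (α v) = c v) → ∀ v, α v = v

noncomputable def Phi {V : Type*} (G : SimpleGraph V) (k : ℕ) : ℕ :=
  Nat.card (Quot (fun c₁ c₂ : {c : V → Fin k // IsDistinguishing G c} =>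
    ∃ α : G ≃g G, ∀ v, c₁.1 v = c₂.1 (α v)))

noncomputable def phi {V : Type*} (G : SimpleGraph V) (k : ℕ) : ℕ :=
  Nat.card (Quot (fun c₁ c₂ : {c : V → Fin k // IsDistinguishing G c ∧ Function.Surjective c} =>
    ∃ α : G ≃g G, ∀ v, c₁.1 v = c₂.1 (α v)))

noncomputable def theta {V : Type*} (G : SimpleGraph V) : ℕ :=
  sInf {t | ∀ k, t ≤ k → ∀ c : V → Fin k, Function.Surjective c → IsDistinguishing G c}

def stirling2 : ℕ → ℕ → ℕ
  | 0, 0 => 1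
  | 0, _ + 1 => 0
  | _ + 1, 0 => 0
  | n + 1, k + 1 => (k + 1) * stirling2 n (k + 1) + stirling2 n k

def IsDCPartition {V : Type*} [DecidableEq V] [Fintype V] (G : SimpleGraph V)
    (P : Finpartition (Finset.univ : Finset V)) : Prop :=
  ∀ α : G ≃g G, (∀ p ∈ P.parts, p.image ⇑α = p) → ∀ v, α v = v

def IsDPartition {V : Type*} [DecidableEq V] [Fintype V] (G : SimpleGraph V)
    (P : Finpartition (Finset.univ : Finset V)) : Prop :=
  ∀ α : G ≃g G, P.parts.image (fun p => p.image ⇑α) = P.parts → ∀ v, α v = v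

def PartEquiv {V : Type*} [DecidableEq V] [Fintype V] (G : SimpleGraph V)
    (P₁ P₂ : Finpartition (Finset.univ : Finset V)) : Prop :=
  ∃ α : G ≃g G, P₁.parts.image (fun p => p.image ⇑α) = P₂.parts

noncomputable def psi {V : Type*} [DecidableEq V] [Fintype V] (G : SimpleGraph V) (k : ℕ) : ℕ :=
  Nat.card (Quot (fun P₁ P₂ : {P : Finpartition (Finset.univ : Finset V) //
      IsDCPartition G P ∧ P.parts.card = k} => PartEquiv G P₁.1 P₂.1))

noncomputable def PsiAtMost {V : Type*} [DecidableEq V] [Fintype V] (G : SimpleGraph V) (k : ℕ) : ℕ :=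
  Nat.card (Quot (fun P₁ P₂ : {P : Finpartition (Finset.univ : Finset V) //
      IsDCPartition G P ∧ P.parts.card ≤ k} => PartEquiv G P₁.1 P₂.1))

noncomputable def PiAtMost {V : Type*} [DecidableEq V] [Fintype V] (G : SimpleGraph V) (k : ℕ) : ℕ :=
  Nat.card (Quot (fun P₁ P₂ : {P : Finpartition (Finset.univ : Finset V) //
      P.parts.card ≤ k} => PartEquiv G P₁.1 P₂.1))

noncomputable def XiAtMost {V : Type*} [DecidableEq V] [Fintype V] (G : SimpleGraph V) (k : ℕ) : ℕ :=
  Nat.card (Quot (fun P₁ P₂ : {P : Finpartition (Finset.univ : Finset V) //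
      IsDPartition G P ∧ P.parts.card ≤ k} => PartEquiv G P₁.1 P₂.1))

def kneserGraph2 (n : ℕ) : SimpleGraph {s : Finset (Fin n) // s.card = 2} where
  Adj a b := Disjoint a.1 b.1
  symm := ⟨fun a b h => h.symm⟩
  loopless := by
    constructor
    rintro ⟨s, hs⟩ h
    simp only [disjoint_self, Finset.bot_eq_empty] at h
    simp [h] at hs

def lexProd {V W : Type*} (X : SimpleGraph V) (Y : SimpleGraph W) : SimpleGraph (V × W) where
  Adj a b := X.Adj a.1 b.1 ∨ (a.1 = b.1 ∧ Y.Adj a.2 b.2)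
  symm := by
    constructor
    rintro ⟨x, y⟩ ⟨x', y'⟩ (h | ⟨h, h'⟩)
    · exact Or.inl h.symm
    · exact Or.inr ⟨h.symm, h'.symm⟩
  loopless := by
    constructor
    rintro ⟨x, y⟩ (h | ⟨-, h⟩)
    · exact X.irrefl h
    · exact Y.irrefl h

def IsNaturalAut {V W : Type*} (X : SimpleGraph V) (Y : SimpleGraph W)
    (μ : lexProd X Y ≃g lexProd X Y) : Prop :=
  ∀ x : V, ∃ x' : V, (fun p => μ p) '' ({x} ×ˢ (Set.univ : Set W)) = {x'} ×ˢ (Set.univ : Set W)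

noncomputable def distNumber {V : Type*} (G : SimpleGraph V) : ℕ :=
  sInf {k | ∃ c : V → Fin k, IsDistinguishing G c}


section CycleAut

variable {m : ℕ}

open Fin.CommRing Fin.NatCast

private lemma cycTwoNeZero (hm : 3 ≤ m) : (2 : Fin (m + 2)) ≠ 0 := by
  intro h
  have h2 : ((2 : ℕ) : Fin (m + 2)) = (2 : Fin (m + 2)) := by norm_cast
  rw [← h2] at h
  have := congrArg Fin.val h
  rw [Fin.val_natCast] at this
  simp only [Fin.val_zero] at this
  rw [Nat.mod_eq_of_lt (by omega)] at this
  omega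

private lemma cyc_adj (hm : 3 ≤ m) {u v : Fin (m + 2)} :
    (cycleGraph (m + 2)).Adj u v ↔ u = v + 1 ∨ v = u + 1 := by
  rw [cycleGraph_adj]
  constructor
  · rintro (h | h)
    · left; rw [sub_eq_iff_eq_add] at h; rw [h]; ring
    · right; rw [sub_eq_iff_eq_add] at h; rw [h]; ring
  · rintro (h | h)
    · left; rw [h]; ring
    · right; rw [h]; ring

private lemma succ_ne_pred (hm : 3 ≤ m) (u : Fin (m + 2)) : u + 1 ≠ u - 1 := by
  intro h
  apply cycTwoNeZero hm
  have h2 : (u + 1) - (u - 1) = (2 : Fin (m + 2)) := by ring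
  rw [h] at h2
  simpa using h2.symm

private lemma aut_nbr (hm : 3 ≤ m) (α : cycleGraph (m + 2) ≃g cycleGraph (m + 2))
    {u v : Fin (m + 2)} (h : (cycleGraph (m + 2)).Adj u v) :
    α v = α u + 1 ∨ α v = α u - 1 := by
  have h2 : (cycleGraph (m + 2)).Adj (α u) (α v) := α.map_adj_iff.2 h
  rw [cyc_adj hm] at h2
  rcases h2 with h2 | h2
  · right; rw [eq_comm, sub_eq_iff_eq_add]; rw [h2]
  · left; exact h2

private lemma adj_succ (hm : 3 ≤ m) (u : Fin (m + 2)) :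
    (cycleGraph (m + 2)).Adj u (u + 1) := by
  rw [cyc_adj hm]; right; rfl

private lemma adj_pred (hm : 3 ≤ m) (u : Fin (m + 2)) :
    (cycleGraph (m + 2)).Adj u (u - 1) := by
  rw [cyc_adj hm]; left; ring

private lemma aut_step (hm : 3 ≤ m) (α β : cycleGraph (m + 2) ≃g cycleGraph (m + 2))
    (u : Fin (m + 2)) (h0 : α (u - 1) = β (u - 1)) (h1 : α u = β u) :
    α (u + 1) = β (u + 1) := by
  have ha := aut_nbr hm α (adj_succ hm u)
  have hb := aut_nbr hm β (adj_succ hm u)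
  rw [← h1] at hb
  have hc := aut_nbr hm α (adj_pred hm u)
  have hne1 : α (u + 1) ≠ α (u - 1) :=
    fun h => succ_ne_pred hm u (α.injective h)
  have hne2 : β (u + 1) ≠ α (u - 1) := by
    rw [h0]; exact fun h => succ_ne_pred hm u (β.injective h)
  have hne3 : α u + 1 ≠ α u - 1 := succ_ne_pred hm (α u)
  rcases ha with ha | ha <;> rcases hb with hb | hb <;> rcases hc with hc | hc <;>
    simp_all

private lemma aut_ext (hm : 3 ≤ m) (α β : cycleGraph (m + 2) ≃g cycleGraph (m + 2))
    (h0 : α 0 = β 0) (h1 : α 1 = β 1) : α = β := by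
  have key : ∀ k : ℕ, α ((k : ℕ) : Fin (m + 2)) = β ((k : ℕ) : Fin (m + 2)) ∧
      α (((k + 1 : ℕ)) : Fin (m + 2)) = β (((k + 1 : ℕ)) : Fin (m + 2)) := by
    intro k
    induction k with
    | zero => simpa using ⟨h0, h1⟩
    | succ k ih =>
      refine ⟨ih.2, ?_⟩
      have hstep := aut_step hm α β (((k + 1 : ℕ)) : Fin (m + 2)) ?_ ih.2
      · have harr : (((k + 1 : ℕ)) : Fin (m + 2)) + 1 = (((k + 1 + 1 : ℕ)) : Fin (m + 2)) := by
          push_cast; ring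
        rwa [harr] at hstep
      · have harr : (((k + 1 : ℕ)) : Fin (m + 2)) - 1 = ((k : ℕ) : Fin (m + 2)) := by
          push_cast; ring
        rw [harr]; exact ih.1
  have : ∀ v : Fin (m + 2), α v = β v := by
    intro v
    have := (key v.val).1
    rwa [Fin.cast_val_eq_self] at this
  exact RelIso.ext this
private def rotrefEquiv (a : Fin (m + 2)) (ε : Bool) : Fin (m + 2) ≃ Fin (m + 2) where
  toFun x := a + (if ε then x else -x)
  invFun y := if ε then y - a else a - y
  left_inv x := by cases ε <;> simp <;> ring
  right_inv y := by cases ε <;> simp <;> ring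

private def rotref (a : Fin (m + 2)) (ε : Bool) :
    cycleGraph (m + 2) ≃g cycleGraph (m + 2) where
  toEquiv := rotrefEquiv a ε
  map_rel_iff' := by
    intro x y
    cases ε
    · show (cycleGraph (m + 2)).Adj (a + -x) (a + -y) ↔ (cycleGraph (m + 2)).Adj x y
      rw [cycleGraph_adj, cycleGraph_adj]
      constructor
      · rintro (h | h)
        · right; rw [← h]; ring
        · left; rw [← h]; ring
      · rintro (h | h)
        · right; rw [← h]; ring
        · left; rw [← h]; ring
    · show (cycleGraph (m + 2)).Adj (a + x) (a + y) ↔ (cycleGraph (m + 2)).Adj x y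
      rw [cycleGraph_adj, cycleGraph_adj]
      constructor
      · rintro (h | h)
        · left; rw [← h]; ring
        · right; rw [← h]; ring
      · rintro (h | h)
        · left; rw [← h]; ring
        · right; rw [← h]; ring

@[simp] private lemma rotref_apply (a : Fin (m + 2)) (ε : Bool) (x : Fin (m + 2)) :
    rotref a ε x = a + (if ε then x else -x) := rfl



private lemma rotref_zero (a : Fin (m + 2)) (ε : Bool) : rotref a ε 0 = a := by
  cases ε <;> simp

private lemma rotref_one_true (a : Fin (m + 2)) : rotref a true 1 = a + 1 := by simp

private lemma rotref_one_false (a : Fin (m + 2)) : rotref a false 1 = a - 1 := by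
  simp [sub_eq_add_neg]

private lemma aut_classify (hm : 3 ≤ m) (α : cycleGraph (m + 2) ≃g cycleGraph (m + 2)) :
    ∃ a ε, α = rotref a ε := by
  have hadj : (cycleGraph (m + 2)).Adj 0 1 := by
    rw [cyc_adj hm]; right; rw [zero_add]
  have h := aut_nbr hm α hadj
  rcases h with h | h
  · refine ⟨α 0, true, aut_ext hm α (rotref (α 0) true) ?_ ?_⟩
    · rw [rotref_zero]
    · rw [rotref_one_true]; exact h
  · refine ⟨α 0, false, aut_ext hm α (rotref (α 0) false) ?_ ?_⟩
    · rw [rotref_zero]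
    · rw [rotref_one_false]; exact h

private lemma rotref_inj (hm : 3 ≤ m) :
    Function.Injective (fun p : Fin (m + 2) × Bool => rotref p.1 p.2) := by
  rintro ⟨a, ε⟩ ⟨b, δ⟩ h
  simp only at h
  have h0 : rotref a ε 0 = rotref b δ 0 := by rw [h]
  rw [rotref_zero, rotref_zero] at h0
  subst h0
  have h1 : rotref a ε 1 = rotref a δ 1 := by rw [h]
  cases ε <;> cases δ
  · rfl
  · rw [rotref_one_false, rotref_one_true] at h1
    exact absurd h1.symm (succ_ne_pred hm a)
  · rw [rotref_one_true, rotref_one_false] at h1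
    exact absurd h1 (succ_ne_pred hm a)
  · rfl

private lemma card_aut (hm : 3 ≤ m) :
    Nat.card (cycleGraph (m + 2) ≃g cycleGraph (m + 2)) = 2 * (m + 2) := by
  have hb : Function.Bijective (fun p : Fin (m + 2) × Bool => rotref p.1 p.2) :=
    ⟨rotref_inj hm, fun α => by
      obtain ⟨a, ε, rfl⟩ := aut_classify hm α; exact ⟨(a, ε), rfl⟩⟩
  rw [← Nat.card_congr (Equiv.ofBijective _ hb)]
  simp only [Nat.card_eq_fintype_card, Fintype.card_prod, Fintype.card_fin, Fintype.card_bool]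
  ring

private lemma no_two_pairs (c : Fin (m + 2) → Fin (m + 1))
    (hc : Function.Surjective c) {p q r s : Fin (m + 2)}
    (hpq : c p = c q) (hrs : c r = c s) (hpq' : p ≠ q) (hrs' : r ≠ s)
    (hqs : q ≠ s) (hps : p ≠ s) (hqr : q ≠ r) : False := by
  classical
  have himg : (Finset.univ : Finset (Fin (m + 1))) ⊆
      ((Finset.univ.erase q).erase s).image c := by
    intro t _
    obtain ⟨w, hw⟩ := hc t
    rcases eq_or_ne w q with rfl | hwq
    · exact Finset.mem_image.2 ⟨p, by simp [Finset.mem_erase, hps, hpq'], hpq ▸ hw⟩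
    rcases eq_or_ne w s with rfl | hws
    · exact Finset.mem_image.2 ⟨r, by simp [Finset.mem_erase, hrs', hqr.symm], hrs ▸ hw⟩
    · exact Finset.mem_image.2 ⟨w, by simp [Finset.mem_erase, hws, hwq], hw⟩
  have h1 : (m + 1) ≤ (((Finset.univ.erase q).erase s).image c).card := by
    have := Finset.card_le_card himg
    simpa using this
  have h2 : (((Finset.univ.erase q).erase s).image c).card ≤ m := by
    refine le_trans (Finset.card_image_le) ?_
    have hs : s ∈ Finset.univ.erase q := by simp [hqs.symm]
    rw [Finset.card_erase_of_mem hs, Finset.card_erase_of_mem (Finset.mem_univ q)]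
    simp
  omega

private lemma pair_unique (c : Fin (m + 2) → Fin (m + 1))
    (hc : Function.Surjective c) {p q r s : Fin (m + 2)}
    (hpq : c p = c q) (hpq' : p ≠ q) (hrs : c r = c s) (hrs' : r ≠ s) :
    (r = p ∧ s = q) ∨ (r = q ∧ s = p) := by
  by_contra hcon
  push_neg at hcon
  obtain ⟨h1, h2⟩ := hcon
  rcases eq_or_ne r p with rfl | hrp
  · -- r = p, so s ≠ q
    have hsq : s ≠ q := h1 rfl
    exact no_two_pairs c hc hpq hrs hpq' hrs' hsq.symm hrs' hpq'.symm
  rcases eq_or_ne r q with rfl | hrq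
  · -- r = q, so s ≠ p
    have hsp : s ≠ p := h2 rfl
    exact no_two_pairs c hc hpq.symm hrs hpq'.symm hrs' hsp.symm hrs' hpq'
  rcases eq_or_ne s q with rfl | hsq
  · -- s = q, r ∉ {p, q}
    exact no_two_pairs c hc hpq.symm hrs.symm hpq'.symm (Ne.symm hrs') hrp.symm hrq.symm hpq'
  rcases eq_or_ne s p with rfl | hsp
  · -- s = p, r ∉ {p, q}
    exact no_two_pairs c hc hpq hrs.symm hpq' (Ne.symm hrs') hrq.symm hrp.symm hpq'.symm
  · exact no_two_pairs c hc hpq hrs hpq' hrs' hsq.symm hsp.symm hrq.symm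

private lemma val_two (hm : 3 ≤ m) : (2 : Fin (m + 2)).val = 2 := by
  have h2 : ((2 : ℕ) : Fin (m + 2)) = (2 : Fin (m + 2)) := by norm_cast
  rw [← h2, Fin.val_natCast, Nat.mod_eq_of_lt (by omega)]

private lemma double_card (hm : 3 ≤ m) {a x y z : Fin (m + 2)}
    (hx : x + x = a) (hy : y + y = a) (hz : z + z = a)
    (hxy : x ≠ y) (hxz : x ≠ z) (hyz : y ≠ z) : False := by
  have hmod : ∀ u : Fin (m + 2), (u.val + u.val) % (m + 2) = u.val + u.val ∨
      ((m + 2) ≤ u.val + u.val ∧ (u.val + u.val) % (m + 2) = u.val + u.val - (m + 2)) := by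
    intro u
    rcases lt_or_ge (u.val + u.val) (m + 2) with h | h
    · exact Or.inl (Nat.mod_eq_of_lt h)
    · right
      refine ⟨h, ?_⟩
      rw [Nat.mod_eq_sub_mod h, Nat.mod_eq_of_lt (by have := u.isLt; omega)]
  have hvx := congrArg Fin.val hx
  have hvy := congrArg Fin.val hy
  have hvz := congrArg Fin.val hz
  rw [Fin.val_add] at hvx hvy hvz
  have hxy' : x.val ≠ y.val := fun h => hxy (Fin.ext h)
  have hxz' : x.val ≠ z.val := fun h => hxz (Fin.ext h)
  have hyz' : y.val ≠ z.val := fun h => hyz (Fin.ext h)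
  have hltx := x.isLt
  have hlty := y.isLt
  have hltz := z.isLt
  rcases hmod x with h1 | ⟨h1a, h1⟩ <;> rcases hmod y with h2 | ⟨h2a, h2⟩ <;>
    rcases hmod z with h3 | ⟨h3a, h3⟩ <;> omega

private lemma surj_distinguishing (hm : 3 ≤ m) (c : Fin (m + 2) → Fin (m + 1))
    (hc : Function.Surjective c) : IsDistinguishing (cycleGraph (m + 2)) c := by
  classical
  intro α hα
  obtain ⟨a, ε, rfl⟩ := aut_classify hm α
  cases ε
  · -- reflection: impossible
    exfalso
    have hca : ∀ v : Fin (m + 2), c (a - v) = c v := by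
      intro v
      have := hα v
      rwa [rotref_apply, if_neg (by simp), ← sub_eq_add_neg] at this
    have hne01 : (0 : Fin (m + 2)) ≠ 1 := by
      intro h; have := congrArg Fin.val h; simp [Fin.val_one] at this
    have hne02 : (0 : Fin (m + 2)) ≠ 2 := by
      intro h; have := congrArg Fin.val h; rw [val_two hm] at this; simp at this
    have hne12 : (1 : Fin (m + 2)) ≠ 2 := by
      intro h; have := congrArg Fin.val h; rw [val_two hm, Fin.val_one] at this; omega
    have hmoved : ∃ x, a - x ≠ x := by
      by_contra hfix
      push_neg at hfix
      have hfx : ∀ v : Fin (m + 2), v + v = a := by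
        intro v
        have := hfix v
        rw [sub_eq_iff_eq_add] at this
        exact this.symm
      exact double_card hm (hfx 0) (hfx 1) (hfx 2) hne01 hne02 hne12
    obtain ⟨x, hx⟩ := hmoved
    have hmoved2 : ∃ y, a - y ≠ y ∧ y ≠ x ∧ y ≠ a - x := by
      by_contra hfix
      push_neg at hfix
      have hbig : 2 < ((Finset.univ.erase x).erase (a - x)).card := by
        rw [Finset.card_erase_of_mem (by simp [hx]), Finset.card_erase_of_mem (Finset.mem_univ x)]
        simp only [Finset.card_univ, Fintype.card_fin]
        omega
      obtain ⟨u, v, w, hu, hv, hw, huv, huw, hvw⟩ := Finset.two_lt_card_iff.1 hbig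
      simp only [Finset.mem_erase, Finset.mem_univ, and_true] at hu hv hw
      have hfix' : ∀ y : Fin (m + 2), y ≠ x → y ≠ a - x → y + y = a := by
        intro y hy1 hy2
        by_contra hyy
        have h5 : a - y ≠ y := by
          intro h6; apply hyy; rw [sub_eq_iff_eq_add] at h6; exact h6.symm
        exact hy2 (hfix y h5 hy1)
      exact double_card hm (hfix' u hu.2 hu.1) (hfix' v hv.2 hv.1) (hfix' w hw.2 hw.1) huv huw hvw
    obtain ⟨y, hy, hyx, hyax⟩ := hmoved2
    refine no_two_pairs c hc (p := x) (q := a - x) (r := y) (s := a - y)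
      (hca x).symm (hca y).symm (Ne.symm hx) (Ne.symm hy) ?_ ?_ ?_
    · intro h
      apply hyx
      have : y = a - (a - y) := by ring
      rw [this, ← h]
      ring
    · intro h
      apply hyax
      rw [h]
      ring
    · exact Ne.symm hyax
  · -- rotation
    have ha0 : a = 0 := by
      by_contra ha
      have hmem : ∃ y : Fin (m + 2), y ∉ ({0, a, -a} : Finset (Fin (m + 2))) := by
        by_contra h
        push_neg at h
        have hsub : (Finset.univ : Finset (Fin (m + 2))).card ≤ ({0, a, -a} : Finset (Fin (m + 2))).card :=
          Finset.card_le_card (fun x _ => h x)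
        have h3 : ({0, a, -a} : Finset (Fin (m + 2))).card ≤ 3 := by
          refine le_trans (Finset.card_insert_le _ _) ?_
          have := Finset.card_insert_le a ({-a} : Finset (Fin (m + 2)))
          simp at this ⊢
          omega
        simp only [Finset.card_univ, Fintype.card_fin] at hsub
        omega
      obtain ⟨y, hy⟩ := hmem
      simp only [Finset.mem_insert, Finset.mem_singleton, not_or] at hy
      obtain ⟨hy0, hya, hyna⟩ := hy
      have hc0 : c a = c 0 := by
        have := hα 0
        rwa [rotref_apply, if_pos rfl, add_zero] at this
      have hcy : c (a + y) = c y := by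
        have := hα y
        rwa [rotref_apply, if_pos rfl] at this
      refine no_two_pairs c hc (p := a) (q := 0) (r := a + y) (s := y)
        hc0 hcy ha ?_ (Ne.symm hy0) (Ne.symm hya) ?_
      · intro h
        apply ha
        have : a = (a + y) - y := by ring
        rw [this, h]
        ring
      · intro h
        apply hyna
        have : y = (a + y) - a := by ring
        rw [this, ← h]
        ring
    intro v
    rw [rotref_apply, if_pos rfl, ha0, zero_add]

private def expandFun (p q : Fin (m + 2)) (hpq : p ≠ q)
    (e : {x : Fin (m + 2) // x ≠ q} ≃ Fin (m + 1)) (x : Fin (m + 2)) : Fin (m + 1) :=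
  if h : x = q then e ⟨p, hpq⟩ else e ⟨x, h⟩

private lemma expandFun_ne {p q : Fin (m + 2)} {hpq : p ≠ q}
    {e : {x : Fin (m + 2) // x ≠ q} ≃ Fin (m + 1)} {x : Fin (m + 2)} (h : x ≠ q) :
    expandFun p q hpq e x = e ⟨x, h⟩ := by
  rw [expandFun, dif_neg h]

private lemma expandFun_eq {p q : Fin (m + 2)} {hpq : p ≠ q}
    {e : {x : Fin (m + 2) // x ≠ q} ≃ Fin (m + 1)} :
    expandFun p q hpq e q = e ⟨p, hpq⟩ := by
  rw [expandFun, dif_pos rfl]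

private noncomputable def collapse (p q : Fin (m + 2)) (hpq : p ≠ q) :
    {c : Fin (m + 2) → Fin (m + 1) // Function.Surjective c ∧ c p = c q} ≃
      ({x : Fin (m + 2) // x ≠ q} ≃ Fin (m + 1)) where
  toFun c := Equiv.ofBijective (fun x => c.1 x.1) (by
    constructor
    · rintro ⟨x, hx⟩ ⟨y, hy⟩ h
      simp only at h
      by_contra hne
      have hxy : x ≠ y := fun h' => hne (by simp [h'])
      rcases pair_unique c.1 c.2.1 c.2.2 hpq h hxy with ⟨h1, h2⟩ | ⟨h1, h2⟩
      · exact hy h2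
      · exact hx h1
    · intro t
      obtain ⟨w, hw⟩ := c.2.1 t
      rcases eq_or_ne w q with rfl | hwq
      · exact ⟨⟨p, hpq⟩, c.2.2.trans hw⟩
      · exact ⟨⟨w, hwq⟩, hw⟩)
  invFun e := ⟨expandFun p q hpq e, by
    refine ⟨?_, ?_⟩
    · intro t
      obtain ⟨⟨x, hx⟩, hxe⟩ := e.surjective t
      exact ⟨x, (expandFun_ne hx).trans hxe⟩
    · rw [expandFun_ne hpq, expandFun_eq]⟩
  left_inv c := by
    apply Subtype.ext
    funext x
    simp only [expandFun, Equiv.ofBijective_apply]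
    split_ifs with h
    · subst h
      exact c.2.2
    · rfl
  right_inv e := by
    ext ⟨x, hx⟩
    simp only [expandFun, Equiv.ofBijective_apply]
    rw [dif_neg hx]

private lemma fiber_two (c : Fin (m + 2) → Fin (m + 1)) (hc : Function.Surjective c) :
    Nat.card {pq : Fin (m + 2) × Fin (m + 2) // pq.1 ≠ pq.2 ∧ c pq.1 = c pq.2} = 2 := by
  classical
  obtain ⟨p, q, hpq, hcp⟩ := Fintype.exists_ne_map_eq_of_card_lt c (by simp)
  rw [Nat.card_eq_fintype_card, Fintype.card_subtype]
  have hfil : Finset.univ.filter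
      (fun pq : Fin (m + 2) × Fin (m + 2) => pq.1 ≠ pq.2 ∧ c pq.1 = c pq.2)
      = {(p, q), (q, p)} := by
    ext ⟨r, s⟩
    simp only [Finset.mem_filter, Finset.mem_univ, true_and, Finset.mem_insert,
      Finset.mem_singleton, Prod.mk.injEq]
    constructor
    · rintro ⟨h1, h2⟩
      rcases pair_unique c hc hcp hpq h2 h1 with ⟨ha, hb⟩ | ⟨ha, hb⟩
      · exact Or.inl ⟨ha, hb⟩
      · exact Or.inr ⟨ha, hb⟩
    · rintro (⟨rfl, rfl⟩ | ⟨rfl, rfl⟩)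
      · exact ⟨hpq, hcp⟩
      · exact ⟨hpq.symm, hcp.symm⟩
  rw [hfil, Finset.card_insert_of_notMem, Finset.card_singleton]
  rw [Finset.mem_singleton]
  exact fun h => hpq (congrArg Prod.fst h)

private def diagEquiv : {pq : Fin (m + 2) × Fin (m + 2) // pq.1 = pq.2} ≃ Fin (m + 2) where
  toFun x := x.1.1
  invFun a := ⟨(a, a), rfl⟩
  left_inv := by rintro ⟨⟨a, b⟩, h⟩; cases h; rfl
  right_inv a := rfl

private lemma card_ne_pairs :
    Fintype.card {pq : Fin (m + 2) × Fin (m + 2) // pq.1 ≠ pq.2} = (m + 2) * (m + 1) := by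
  classical
  have h1 := Fintype.card_subtype_compl (fun pq : Fin (m + 2) × Fin (m + 2) => pq.1 = pq.2)
  have h2 : Fintype.card {pq : Fin (m + 2) × Fin (m + 2) // pq.1 = pq.2} = m + 2 := by
    rw [Fintype.card_congr diagEquiv, Fintype.card_fin]
  show Fintype.card {pq : Fin (m + 2) × Fin (m + 2) // ¬pq.1 = pq.2} = (m + 2) * (m + 1)
  rw [h1, h2, Fintype.card_prod, Fintype.card_fin]
  have : (m + 2) * (m + 2) = (m + 2) * (m + 1) + (m + 2) := by ring
  omega

private def sigmaPairs :
    {x : (Fin (m + 2) → Fin (m + 1)) × (Fin (m + 2) × Fin (m + 2)) //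
        Function.Surjective x.1 ∧ x.2.1 ≠ x.2.2 ∧ x.1 x.2.1 = x.1 x.2.2} ≃
      Σ pq : {pq : Fin (m + 2) × Fin (m + 2) // pq.1 ≠ pq.2},
        {c : Fin (m + 2) → Fin (m + 1) // Function.Surjective c ∧ c pq.1.1 = c pq.1.2} where
  toFun x := ⟨⟨x.1.2, x.2.2.1⟩, ⟨x.1.1, x.2.1, x.2.2.2⟩⟩
  invFun y := ⟨(y.2.1, y.1.1), y.2.2.1, y.1.2, y.2.2.2⟩
  left_inv x := rfl
  right_inv y := rfl

private def sigmaColors :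
    {x : (Fin (m + 2) → Fin (m + 1)) × (Fin (m + 2) × Fin (m + 2)) //
        Function.Surjective x.1 ∧ x.2.1 ≠ x.2.2 ∧ x.1 x.2.1 = x.1 x.2.2} ≃
      Σ c : {c : Fin (m + 2) → Fin (m + 1) // Function.Surjective c},
        {pq : Fin (m + 2) × Fin (m + 2) // pq.1 ≠ pq.2 ∧ c.1 pq.1 = c.1 pq.2} where
  toFun x := ⟨⟨x.1.1, x.2.1⟩, ⟨x.1.2, x.2.2⟩⟩
  invFun y := ⟨(y.1.1, y.2.1), y.1.2, y.2.2⟩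
  left_inv x := rfl
  right_inv y := rfl

private lemma card_collapse (p q : Fin (m + 2)) (hpq : p ≠ q) :
    Fintype.card {c : Fin (m + 2) → Fin (m + 1) // Function.Surjective c ∧ c p = c q}
      = (m + 1).factorial := by
  classical
  rw [Fintype.card_congr (collapse p q hpq)]
  have hcard : Fintype.card {x : Fin (m + 2) // x ≠ q} = m + 1 := by
    have := Fintype.card_subtype_compl (fun x : Fin (m + 2) => x = q)
    show Fintype.card {x : Fin (m + 2) // ¬x = q} = m + 1
    rw [this, Fintype.card_subtype_eq, Fintype.card_fin]
    omega
  rw [Fintype.card_equiv (Fintype.equivFinOfCardEq hcard), hcard]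

private lemma card_surj (hm : 3 ≤ m) :
    2 * Nat.card {c : Fin (m + 2) → Fin (m + 1) // Function.Surjective c}
      = ((m + 2) * (m + 1)) * (m + 1).factorial := by
  classical
  have hA : Nat.card {x : (Fin (m + 2) → Fin (m + 1)) × (Fin (m + 2) × Fin (m + 2)) //
        Function.Surjective x.1 ∧ x.2.1 ≠ x.2.2 ∧ x.1 x.2.1 = x.1 x.2.2}
      = 2 * Nat.card {c : Fin (m + 2) → Fin (m + 1) // Function.Surjective c} := by
    rw [Nat.card_congr sigmaColors, Nat.card_eq_fintype_card, Fintype.card_sigma]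
    rw [Finset.sum_congr rfl (fun c _ => by
      rw [← Nat.card_eq_fintype_card, fiber_two c.1 c.2])]
    rw [Finset.sum_const, Finset.card_univ, smul_eq_mul, Nat.card_eq_fintype_card]
    ring
  have hB : Nat.card {x : (Fin (m + 2) → Fin (m + 1)) × (Fin (m + 2) × Fin (m + 2)) //
        Function.Surjective x.1 ∧ x.2.1 ≠ x.2.2 ∧ x.1 x.2.1 = x.1 x.2.2}
      = ((m + 2) * (m + 1)) * (m + 1).factorial := by
    rw [Nat.card_congr sigmaPairs, Nat.card_eq_fintype_card, Fintype.card_sigma]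
    rw [Finset.sum_congr rfl (fun pq _ => card_collapse pq.1.1 pq.1.2 pq.2)]
    rw [Finset.sum_const, Finset.card_univ, smul_eq_mul, card_ne_pairs]
  rw [← hA, hB]

private abbrev SDist (m : ℕ) := {c : Fin (m + 2) → Fin (m + 1) //
    IsDistinguishing (cycleGraph (m + 2)) c ∧ Function.Surjective c}

private def rrel (m : ℕ) : SDist m → SDist m → Prop := fun c₁ c₂ =>
  ∃ α : cycleGraph (m + 2) ≃g cycleGraph (m + 2), ∀ v, c₁.1 v = c₂.1 (α v)

private lemma rrel_equiv : Equivalence (rrel m) := by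
  constructor
  · intro c
    exact ⟨RelIso.refl _, fun v => rfl⟩
  · rintro c₁ c₂ ⟨α, h⟩
    refine ⟨α.symm, fun v => ?_⟩
    have := h (α.symm v)
    rw [RelIso.apply_symm_apply] at this
    exact this.symm
  · rintro c₁ c₂ c₃ ⟨α, h⟩ ⟨β, h'⟩
    exact ⟨α.trans β, fun v => (h v).trans (h' (α v))⟩

private noncomputable def Fmap (hm : 3 ≤ m) (c₀ : SDist m)
    (α : cycleGraph (m + 2) ≃g cycleGraph (m + 2)) : SDist m :=
  ⟨fun v => c₀.1 (α v), surj_distinguishing hm _ (c₀.2.2.comp α.surjective),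
    c₀.2.2.comp α.surjective⟩

private noncomputable def fiberEquiv (hm : 3 ≤ m) (c₀ : SDist m) :
    (cycleGraph (m + 2) ≃g cycleGraph (m + 2)) ≃
      {c : SDist m // Quot.mk (rrel m) c = Quot.mk (rrel m) c₀} := by
  refine Equiv.ofBijective (fun α => ⟨Fmap hm c₀ α, Quot.sound ⟨α, fun v => rfl⟩⟩) ⟨?_, ?_⟩
  · intro α β h
    have h'' : Fmap hm c₀ α = Fmap hm c₀ β := congrArg Subtype.val h
    have h' : ∀ v, c₀.1 (α v) = c₀.1 (β v) := fun v =>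
      congrFun (congrArg Subtype.val h'') v
    have hδ : ∀ v, c₀.1 ((β.symm.trans α) v) = c₀.1 v := by
      intro v
      have := h' (β.symm v)
      rw [RelIso.apply_symm_apply] at this
      exact this
    have hid := c₀.2.1 (β.symm.trans α) hδ
    apply RelIso.ext
    intro v
    have := hid (β v)
    rw [show (β.symm.trans α) (β v) = α (β.symm (β v)) from rfl, RelIso.symm_apply_apply] at this
    exact this
  · rintro ⟨c, hq⟩
    have hr : rrel m c c₀ := (rrel_equiv.eqvGen_iff).1 (Quot.eq.1 hq)
    obtain ⟨α, h⟩ := hr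
    refine ⟨α, ?_⟩
    apply Subtype.ext
    show Fmap hm c₀ α = c
    apply Subtype.ext
    funext v
    exact (h v).symm

private lemma fiber_card (hm : 3 ≤ m) (ω : Quot (rrel m)) :
    Nat.card {c : SDist m // Quot.mk (rrel m) c = ω} = 2 * (m + 2) := by
  induction ω using Quot.ind with
  | _ c₀ => rw [← Nat.card_congr (fiberEquiv hm c₀), card_aut hm]

private lemma quot_card (hm : 3 ≤ m) :
    Nat.card (SDist m) = Nat.card (Quot (rrel m)) * (2 * (m + 2)) := by
  classical
  letI : Fintype (SDist m) := Fintype.ofFinite _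
  letI : Fintype (Quot (rrel m)) := Fintype.ofFinite _
  rw [← Nat.card_congr (Equiv.sigmaFiberEquiv (Quot.mk (rrel m)))]
  rw [Nat.card_eq_fintype_card, Fintype.card_sigma]
  rw [Finset.sum_congr rfl (fun ω _ => by
    rw [← Nat.card_eq_fintype_card, fiber_card hm ω])]
  rw [Finset.sum_const, Finset.card_univ, smul_eq_mul, Nat.card_eq_fintype_card]

theorem phi_cycleGraph_pred (n : ℕ) (hn : 5 ≤ n) :
    phi (cycleGraph n) (n - 1) = (n - 1) * (n - 1).factorial / 4 := by
  obtain ⟨m, rfl⟩ : ∃ m, n = m + 2 := ⟨n - 2, by omega⟩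
  have hm : 3 ≤ m := by omega
  show Nat.card (Quot (rrel m)) = (m + 1) * (m + 1).factorial / 4
  have hQ := quot_card hm
  have hS : Nat.card (SDist m)
      = Nat.card {c : Fin (m + 2) → Fin (m + 1) // Function.Surjective c} :=
    Nat.card_congr (Equiv.subtypeEquivRight (fun c =>
      ⟨fun h => h.2, fun h => ⟨surj_distinguishing hm c h, h⟩⟩))
  have h2 := card_surj hm
  set Q := Nat.card (Quot (rrel m)) with hQdef
  have h5 : (Q * 4) * (m + 2) = ((m + 1) * (m + 1).factorial) * (m + 2) := by
    calc (Q * 4) * (m + 2) = 2 * (Q * (2 * (m + 2))) := by ring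
    _ = 2 * Nat.card (SDist m) := by rw [← hQ]
    _ = 2 * Nat.card {c : Fin (m + 2) → Fin (m + 1) // Function.Surjective c} := by rw [hS]
    _ = ((m + 2) * (m + 1)) * (m + 1).factorial := h2
    _ = ((m + 1) * (m + 1).factorial) * (m + 2) := by ring
  have h6 : Q * 4 = (m + 1) * (m + 1).factorial :=
    Nat.eq_of_mul_eq_mul_right (by omega) h5
  rw [← h6, Nat.mul_div_cancel Q (by norm_num)]
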